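/- Let p, q > 0 be real numbers satisfying 10q + 4p < 15, q + p < 3 and 2(q + p) > 1. Then there exists a real number r > 1 such that: r > 2p; 2p(r − 1) < 5r; the number s := 2qr/(r − 2p) satisfies s > 1; and 10qr/(5r − 2p(r − 1)) < 2s/(s − 1). -/
import Mathlib

private lemma aux_stmt_17 (p q r : ℝ) (hp : 0 < p) (hq : 0 < q)
    (hr1 : 1 < r) (hr2 : 2 * p < r)
    (hr3 : r * (2 * p - 5) < 2 * p) (hr4 : r * (1 - 2 * q) < 2 * p)
    (hr5 : 12 * p < r * (30 - 20 * q - 8 * p)) :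
    ∃ r' s : ℝ, 1 < r' ∧ 2 * p < r' ∧ 2 * p * (r' - 1) < 5 * r' ∧
      s = 2 * q * r' / (r' - 2 * p) ∧ 1 < s ∧
      10 * q * r' / (5 * r' - 2 * p * (r' - 1)) < 2 * s / (s - 1) := by
  have hr0 : (0:ℝ) < r := by linarith
  have hd : 0 < r - 2 * p := by linarith
  have hs1 : 1 < 2 * q * r / (r - 2 * p) := by
    rw [lt_div_iff₀ hd]; nlinarith
  refine ⟨r, 2 * q * r / (r - 2 * p), hr1, hr2, by nlinarith, rfl, hs1, ?_⟩
  have hD1 : 0 < 5 * r - 2 * p * (r - 1) := by nlinarith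
  have hD2 : 0 < 2 * q * r - r + 2 * p := by nlinarith
  have hsd : 0 < 2 * q * r / (r - 2 * p) - 1 := by linarith
  have heq : 2 * (2 * q * r / (r - 2 * p)) / (2 * q * r / (r - 2 * p) - 1)
      = 4 * q * r / (2 * q * r - r + 2 * p) := by
    rw [div_eq_div_iff (ne_of_gt hsd) (ne_of_gt hD2)]
    field_simp
    ring
  rw [heq, div_lt_div_iff₀ hD1 hD2]
  nlinarith [mul_pos (mul_pos hq hr0) (show 0 < r * (30 - 20 * q - 8 * p) - 12 * p by linarith)]

/-- Choice of the interpolation exponent `r` in the 1-D case of Lemma 3.5: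
under `10q + 4p < 15`, `q + p < 3` and `2(q + p) > 1`, there is `r > 1` with
`r > 2p`, `2p(r-1) < 5r`, `s := 2qr/(r-2p) > 1` and
`10qr/(5r - 2p(r-1)) < 2s/(s-1)`. -/
theorem stmt_17 (p q : ℝ) (hp : 0 < p) (hq : 0 < q)
    (h1 : 10 * q + 4 * p < 15) (h2 : q + p < 3) (h3 : 1 < 2 * (q + p)) :
    ∃ r s : ℝ, 1 < r ∧ 2 * p < r ∧ 2 * p * (r - 1) < 5 * r ∧
      s = 2 * q * r / (r - 2 * p) ∧ 1 < s ∧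
      10 * q * r / (5 * r - 2 * p * (r - 1)) < 2 * s / (s - 1) := by
  set c : ℝ := 30 - 20 * q - 8 * p with hc_def
  have hc : 0 < c := by simp only [hc_def]; linarith
  set L : ℝ := max (max 1 (2 * p)) (12 * p / c) with hL_def
  have hL1 : 1 ≤ L := le_trans (le_max_left _ _) (le_max_left _ _)
  have hL2 : 2 * p ≤ L := le_trans (le_max_right _ _) (le_max_left _ _)
  have hL3 : 12 * p / c ≤ L := le_max_right _ _
  set m : ℝ := max (2 * p - 5) (1 - 2 * q) with hm_def
  rcases le_or_gt m 0 with hm | hm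
  · -- upper constraints inactive; take r = L + 1
    have h1' : 2 * p - 5 ≤ 0 := le_trans (le_max_left _ _) hm
    have h2' : 1 - 2 * q ≤ 0 := le_trans (le_max_right _ _) hm
    have hr0 : (0:ℝ) < L + 1 := by linarith
    refine aux_stmt_17 p q (L + 1) hp hq (by linarith) (by linarith) ?_ ?_ ?_
    · nlinarith
    · nlinarith
    · have h12 : 12 * p / c < L + 1 := by linarith
      have h13 := (div_lt_iff₀ hc).mp h12
      rw [hc_def] at h13
      linarith
  · -- upper constraints active; take the midpoint of (L, 2p/m)
    have hm1 : m < 1 := by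
      apply max_lt <;> linarith
    have hm2p : m < 2 * p := by
      apply max_lt <;> linarith
    have hA : 2 * p - 5 < c / 6 := by rw [hc_def]; linarith
    have hB : 1 - 2 * q < c / 6 := by rw [hc_def]; linarith
    have h6m : 6 * m < c := by have := max_lt hA hB; linarith
    have hLU : L < 2 * p / m := by
      apply max_lt
      · apply max_lt
        · rw [lt_div_iff₀ hm]; linarith
        · rw [lt_div_iff₀ hm]; nlinarith
      · rw [div_lt_div_iff₀ hc hm]; nlinarith
    set r : ℝ := (L + 2 * p / m) / 2 with hr_def
    have hrL : L < r := by simp only [hr_def]; linarith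
    have hrU : r < 2 * p / m := by simp only [hr_def]; linarith
    have hr0 : (0:ℝ) < r := by linarith
    have hrm : r * m < 2 * p := by
      have := (lt_div_iff₀ hm).mp hrU; linarith
    refine aux_stmt_17 p q r hp hq (by linarith) (by linarith) ?_ ?_ ?_
    · have : r * (2 * p - 5) ≤ r * m := by
        apply mul_le_mul_of_nonneg_left (le_max_left _ _) (le_of_lt hr0)
      linarith
    · have : r * (1 - 2 * q) ≤ r * m := by
        apply mul_le_mul_of_nonneg_left (le_max_right _ _) (le_of_lt hr0)
      linarith
    · have h12 : 12 * p / c < r := lt_of_le_of_lt hL3 hrL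
      have h13 := (div_lt_iff₀ hc).mp h12
      rw [hc_def] at h13
      linarith
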